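/- arXiv:1103.5817 — 8 statements merged into one kernel-verified Lean document; each statement's English description precedes it below -/
import Mathlib

section
/- The semidihedral group of order 16, presented as the group with two generators s, t subject to the relations s^8 = 1, t^2 = 1, and t*s*t*s^{-3} = 1, has exactly 16 elements. Formally: if rels : Set (FreeGroup (Fin 2)) is the set {a^8, b^2, b*a*b*a⁻¹*a⁻¹*a⁻¹} where a = FreeGroup.of 0 and b = FreeGroup.of 1, then Nat.card (PresentedGroup rels) = 16. -/
/-!
For `r² ≡ 1 [MOD n]`, `x ↦ x ^ r` is an involutive automorphism of `C_n = Multiplicative (ZMod n)`,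
through which `C_2` acts on `C_n`. The generators of `C_n ⋊ C_2` satisfy `a ^ n = b ^ 2 = 1` and
`b a b = a ^ r`; conversely the generators `a, b` of the presented group satisfy the compatibility
needed to define a map out of `C_n ⋊ C_2`. Both composites fix the generators, so the presented
group is isomorphic to `C_n ⋊ C_2`, of order `2 n`. The semidihedral group of order 16 is the case
`n = 8`, `r = 3`.
-/

section ZModPowersHom

variable {G : Type*} [Group G] {n : ℕ}

def zmodPowersHom (g : G) (hg : g ^ n = 1) : Multiplicative (ZMod n) →* G :=
  AddMonoidHom.toMultiplicativeLeft <| ZMod.lift n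
    ⟨zmultiplesHom (Additive G) (Additive.ofMul g), by simpa [← ofMul_pow] using hg⟩

lemma zmodPowersHom_ofAdd_intCast (g : G) (hg : g ^ n = 1) (k : ℤ) :
    zmodPowersHom g hg (Multiplicative.ofAdd (k : ZMod n)) = g ^ k := by
  simp [zmodPowersHom]

@[simp]
lemma zmodPowersHom_ofAdd_one (g : G) (hg : g ^ n = 1) :
    zmodPowersHom g hg (Multiplicative.ofAdd 1) = g := by
  simpa using zmodPowersHom_ofAdd_intCast g hg 1

lemma MonoidHom.ext_mzmod {f f' : Multiplicative (ZMod n) →* G}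
    (h : f (Multiplicative.ofAdd 1) = f' (Multiplicative.ofAdd 1)) : f = f' := by
  refine MonoidHom.ext fun x => ?_
  obtain ⟨k, hk⟩ := ZMod.intCast_surjective (Multiplicative.toAdd x)
  rw [← ofAdd_toAdd x, ← hk, ← zsmul_one, ofAdd_zsmul, map_zpow, map_zpow, h]

end ZModPowersHom

lemma Multiplicative.ofAdd_one_pow_self (n : ℕ) : (ofAdd (1 : ZMod n)) ^ n = 1 := by
  rw [← ofAdd_nsmul, nsmul_one, ZMod.natCast_self, ofAdd_zero]

lemma Multiplicative.zmod_two_eq_one_or_eq_ofAdd_one (g : Multiplicative (ZMod 2)) :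
    g = 1 ∨ g = .ofAdd 1 := by
  revert g
  decide

lemma Multiplicative.card_zmod (n : ℕ) : Nat.card (Multiplicative (ZMod n)) = n := by
  rw [Nat.card_congr Multiplicative.toAdd, Nat.card_zmod]

section

variable {n r : ℕ}

lemma pow_pow_of_natCast_mul_eq_one (hr : (r : ZMod n) * r = 1) (x : Multiplicative (ZMod n)) :
    (x ^ r) ^ r = x := by
  apply Multiplicative.toAdd.injective
  simp only [toAdd_pow, nsmul_eq_mul, ← mul_assoc, hr, one_mul]

def powMulAut (hr : (r : ZMod n) * r = 1) : MulAut (Multiplicative (ZMod n)) where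
  toFun x := x ^ r
  invFun x := x ^ r
  left_inv := pow_pow_of_natCast_mul_eq_one hr
  right_inv := pow_pow_of_natCast_mul_eq_one hr
  map_mul' x y := mul_pow x y r

@[simp]
lemma powMulAut_apply (hr : (r : ZMod n) * r = 1) (x : Multiplicative (ZMod n)) :
    powMulAut hr x = x ^ r :=
  rfl

lemma powMulAut_sq (hr : (r : ZMod n) * r = 1) : powMulAut hr ^ 2 = 1 := by
  ext x
  exact pow_pow_of_natCast_mul_eq_one hr x

variable (n r) in
def splitMetacyclicRels : Set (FreeGroup (Fin 2)) :=
  {FreeGroup.of 0 ^ n, FreeGroup.of 1 ^ 2,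
    FreeGroup.of 1 * FreeGroup.of 0 * FreeGroup.of 1 * (FreeGroup.of 0 ^ r)⁻¹}

abbrev SplitMetacyclic (hr : (r : ZMod n) * r = 1) :=
  Multiplicative (ZMod n) ⋊[zmodPowersHom (powMulAut hr) (powMulAut_sq hr)]
    Multiplicative (ZMod 2)

end

namespace SplitMetacyclic

variable {n r : ℕ} (hr : (r : ZMod n) * r = 1)

local notation "P" => PresentedGroup (splitMetacyclicRels n r)

lemma of_zero_pow : (PresentedGroup.of 0 : P) ^ n = 1 :=
  PresentedGroup.one_of_mem (by simp [splitMetacyclicRels])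

lemma of_one_sq : (PresentedGroup.of 1 : P) ^ 2 = 1 :=
  PresentedGroup.one_of_mem (by simp [splitMetacyclicRels])

lemma of_one_inv : (PresentedGroup.of 1 : P)⁻¹ = PresentedGroup.of 1 :=
  inv_eq_of_mul_eq_one_right ((pow_two _).symm.trans of_one_sq)

lemma of_one_mul_of_zero_mul_of_one :
    (PresentedGroup.of 1 * PresentedGroup.of 0 * PresentedGroup.of 1 : P) =
      PresentedGroup.of 0 ^ r :=
  mul_inv_eq_one.mp (PresentedGroup.one_of_mem (by simp [splitMetacyclicRels]))

lemma lift_generators_eq_one :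
    ∀ w ∈ splitMetacyclicRels n r, FreeGroup.lift
      ![SemidirectProduct.inl (.ofAdd 1), SemidirectProduct.inr (.ofAdd 1)] w =
        (1 : SplitMetacyclic hr) := by
  rintro _ (rfl | rfl | rfl)
  all_goals simp only [map_mul, map_inv, map_pow, FreeGroup.lift_apply_of,
    Matrix.cons_val_zero, Matrix.cons_val_one]
  · rw [← map_pow, Multiplicative.ofAdd_one_pow_self, map_one]
  · rw [← map_pow, Multiplicative.ofAdd_one_pow_self, map_one]
  · have hb : (Multiplicative.ofAdd 1 : Multiplicative (ZMod 2))⁻¹ = .ofAdd 1 := by decide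
    have ha : zmodPowersHom (powMulAut hr) (powMulAut_sq hr) (.ofAdd 1) (.ofAdd 1) =
        .ofAdd 1 ^ r := by simp
    rw [mul_inv_eq_one, ← map_pow, ← ha, SemidirectProduct.inl_aut, hb]

def toSemidirect : P →* SplitMetacyclic hr :=
  PresentedGroup.toGroup (lift_generators_eq_one hr)

def ofSemidirect : SplitMetacyclic hr →* P :=
  SemidirectProduct.lift (zmodPowersHom _ of_zero_pow) (zmodPowersHom _ of_one_sq) (by
    intro g
    apply MonoidHom.ext_mzmod
    rcases Multiplicative.zmod_two_eq_one_or_eq_ofAdd_one g with rfl | rfl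
    · simp
    · simp [of_one_inv, of_one_mul_of_zero_mul_of_one])

def presentedGroupEquiv : P ≃* SplitMetacyclic hr :=
  MonoidHom.toMulEquiv (toSemidirect hr) (ofSemidirect hr)
    (PresentedGroup.ext fun i => by fin_cases i <;> simp [toSemidirect, ofSemidirect])
    (SemidirectProduct.hom_ext
      (MonoidHom.ext_mzmod (by simp [toSemidirect, ofSemidirect]))
      (MonoidHom.ext_mzmod (by simp [toSemidirect, ofSemidirect])))

end SplitMetacyclic

theorem card_presentedGroup_splitMetacyclicRels {n r : ℕ} (hr : (r : ZMod n) * r = 1) :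
    Nat.card (PresentedGroup (splitMetacyclicRels n r)) = n * 2 := by
  rw [Nat.card_congr (SplitMetacyclic.presentedGroupEquiv hr).toEquiv, SemidirectProduct.card,
    Multiplicative.card_zmod, Multiplicative.card_zmod]

/-- The semidihedral group of order 16, presented as
`⟨s, t | s^8 = 1, t^2 = 1, t*s*t*s⁻³ = 1⟩`, has exactly 16 elements. -/
theorem semidihedral16_card :
    Nat.card (PresentedGroup
      ({(FreeGroup.of 0) ^ 8, (FreeGroup.of 1) ^ 2,
        FreeGroup.of 1 * FreeGroup.of 0 * FreeGroup.of 1 *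
          (FreeGroup.of 0)⁻¹ * (FreeGroup.of 0)⁻¹ * (FreeGroup.of 0)⁻¹} :
        Set (FreeGroup (Fin 2)))) = 16 := by
  have hrels : ({(FreeGroup.of 0) ^ 8, (FreeGroup.of 1) ^ 2,
      FreeGroup.of 1 * FreeGroup.of 0 * FreeGroup.of 1 *
        (FreeGroup.of 0)⁻¹ * (FreeGroup.of 0)⁻¹ * (FreeGroup.of 0)⁻¹} :
      Set (FreeGroup (Fin 2))) = splitMetacyclicRels 8 3 := by
    simp only [splitMetacyclicRels, pow_three, mul_inv_rev, mul_assoc]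
  rw [hrels, card_presentedGroup_splitMetacyclicRels (by decide)]
end

section
/- Let G be a group and s, t : G with orderOf s = 8, orderOf t = 2, and t * s * t = s^3. Then the subgroup of G generated by {s^2, t*s} is isomorphic (as a group) to the quaternion group of order 8 (QuaternionGroup 2 in Mathlib). -/
/-- If `s, t : G` satisfy `orderOf s = 8`, `orderOf t = 2` and `t*s*t = s³`
(a semidihedral configuration), then the subgroup generated by `{s², t*s}`
is isomorphic to the quaternion group of order 8. -/
theorem semidihedral_quaternion_subgroup {G : Type*} [Group G] (s t : G)
    (hs : orderOf s = 8) (ht : orderOf t = 2) (hst : t * s * t = s ^ 3) :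
    Nonempty ((Subgroup.closure ({s ^ 2, t * s} : Set G)) ≃* QuaternionGroup 2) := by
  have hs8 : s ^ 8 = 1 := by rw [← hs]; exact pow_orderOf_eq_one s
  have ht2 : t * t = 1 := by
    have := pow_orderOf_eq_one t; rw [ht, pow_two] at this; exact this
  have htinv : t⁻¹ = t := inv_eq_of_mul_eq_one_left ht2
  have hoA : orderOf (s ^ 2) = 4 := by
    rw [orderOf_pow' s (two_ne_zero), hs]; norm_num
  have hconj : ∀ n : ℕ, t * s ^ n * t = s ^ (3 * n) := by
    intro n
    have h3 : t * s * t⁻¹ = s ^ 3 := by rw [htinv]; exact hst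
    calc t * s ^ n * t = t * s ^ n * t⁻¹ := by rw [htinv]
      _ = (t * s * t⁻¹) ^ n := conj_pow.symm
      _ = (s ^ 3) ^ n := by rw [h3]
      _ = s ^ (3 * n) := by rw [← pow_mul]
  have hs2t : s ^ 2 * t = t * s ^ 6 := by
    have h6 : t * s ^ 6 * t = s ^ 18 := by rw [hconj 6]
    have h18 : s ^ 18 = s ^ 2 := by
      rw [show (18 : ℕ) = 8 * 2 + 2 by norm_num, pow_add, pow_mul, hs8, one_pow, one_mul]
    have key := h6.trans h18
    calc s ^ 2 * t = (t * s ^ 6 * t) * t := by rw [key]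
      _ = t * s ^ 6 * (t * t) := by group
      _ = t * s ^ 6 := by rw [ht2, mul_one]
  have hsinv : s⁻¹ = s ^ 7 := by
    apply inv_eq_of_mul_eq_one_left
    rw [← pow_succ]; exact hs8
  have hAB : s ^ 2 * (t * s) = t * s * (s ^ 2)⁻¹ := by
    calc s ^ 2 * (t * s) = (s ^ 2 * t) * s := by rw [mul_assoc]
      _ = t * s ^ 6 * s := by rw [hs2t]
      _ = t * s ^ 7 := by rw [mul_assoc, ← pow_succ]
      _ = t * s⁻¹ := by rw [hsinv]
      _ = t * s * (s ^ 2)⁻¹ := by group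
  have hABn : ∀ n : ℕ, (s ^ 2) ^ n * (t * s) = t * s * ((s ^ 2) ^ n)⁻¹ := by
    intro n
    induction n with
    | zero => simp
    | succ k ih =>
        calc (s ^ 2) ^ (k + 1) * (t * s)
            = (s ^ 2) ^ k * (s ^ 2 * (t * s)) := by rw [pow_succ, mul_assoc]
          _ = (s ^ 2) ^ k * (t * s * (s ^ 2)⁻¹) := by rw [hAB]
          _ = ((s ^ 2) ^ k * (t * s)) * (s ^ 2)⁻¹ := (mul_assoc _ _ _).symm
          _ = t * s * ((s ^ 2) ^ k)⁻¹ * (s ^ 2)⁻¹ := by rw [ih]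
          _ = t * s * ((s ^ 2) ^ (k + 1))⁻¹ := by rw [pow_succ, mul_inv_rev]; group
  have hBB : t * s * (t * s) = (s ^ 2) ^ 2 := by
    calc t * s * (t * s) = (t * s * t) * s := by group
      _ = s ^ 3 * s := by rw [hst]
      _ = (s ^ 2) ^ 2 := by group
  have hadd : ∀ i j : ZMod (2 * 2),
      (s ^ 2) ^ (i + j).val = (s ^ 2) ^ i.val * (s ^ 2) ^ j.val := by
    intro i j
    have hmod : (i.val + j.val) % (2 * 2) = (i.val + j.val) % orderOf (s ^ 2) := by
      rw [hoA]
    rw [← pow_add, ZMod.val_add, hmod, pow_mod_orderOf]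
  have hneg : ∀ i : ZMod (2 * 2), (s ^ 2) ^ (-i).val = ((s ^ 2) ^ i.val)⁻¹ := by
    intro i
    apply eq_inv_of_mul_eq_one_left
    rw [← hadd, neg_add_cancel]
    simp
  let f : QuaternionGroup 2 → G := fun x =>
    match x with
    | QuaternionGroup.a i => (s ^ 2) ^ i.val
    | QuaternionGroup.xa i => t * s * (s ^ 2) ^ i.val
  have hf_a : ∀ i, f (QuaternionGroup.a i) = (s ^ 2) ^ i.val := fun _ => rfl
  have hf_xa : ∀ i, f (QuaternionGroup.xa i) = t * s * (s ^ 2) ^ i.val := fun _ => rfl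
  let φ : QuaternionGroup 2 →* G :=
    { toFun := f
      map_one' := by
        show f (QuaternionGroup.a 0) = 1
        rw [hf_a]; simp
      map_mul' := by
        rintro (i | i) (j | j)
        · show f (QuaternionGroup.a (i + j)) = f (QuaternionGroup.a i) * f (QuaternionGroup.a j)
          rw [hf_a, hf_a, hf_a, hadd]
        · show f (QuaternionGroup.xa (j - i)) =
            f (QuaternionGroup.a i) * f (QuaternionGroup.xa j)
          rw [hf_xa, hf_a, hf_xa, sub_eq_neg_add, hadd, hneg, ← mul_assoc, ← mul_assoc, hABn]
        · show f (QuaternionGroup.xa (i + j)) =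
            f (QuaternionGroup.xa i) * f (QuaternionGroup.a j)
          rw [hf_xa, hf_xa, hf_a, hadd]
          exact (mul_assoc _ _ _).symm
        · show f (QuaternionGroup.a (((2 : ℕ) : ZMod (2 * 2)) + j - i)) =
            f (QuaternionGroup.xa i) * f (QuaternionGroup.xa j)
          rw [hf_a, hf_xa, hf_xa]
          have h2 : (((2 : ℕ) : ZMod (2 * 2))).val = 2 := by decide
          calc (s ^ 2) ^ (((2 : ℕ) : ZMod (2 * 2)) + j - i).val
              = (s ^ 2) ^ (((2 : ℕ) : ZMod (2 * 2)) + (-i + j)).val := by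
                congr 1; ring
            _ = (s ^ 2) ^ 2 * ((s ^ 2) ^ (-i).val * (s ^ 2) ^ j.val) := by
                rw [hadd, hadd, h2]
            _ = (t * s * (t * s)) * (((s ^ 2) ^ i.val)⁻¹ * (s ^ 2) ^ j.val) := by
                rw [hBB, hneg]
            _ = t * s * (t * s * ((s ^ 2) ^ i.val)⁻¹) * (s ^ 2) ^ j.val := by
                group
            _ = t * s * ((s ^ 2) ^ i.val * (t * s)) * (s ^ 2) ^ j.val := by rw [hABn]
            _ = t * s * (s ^ 2) ^ i.val * (t * s * (s ^ 2) ^ j.val) := by group }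
  have hphi_a : ∀ i, φ (QuaternionGroup.a i) = (s ^ 2) ^ i.val := fun _ => rfl
  have hphi_xa : ∀ i, φ (QuaternionGroup.xa i) = t * s * (s ^ 2) ^ i.val := fun _ => rfl
  have hinj : Function.Injective φ := by
    apply (injective_iff_map_eq_one φ).mpr
    rintro (i | i) hone
    · rw [hphi_a] at hone
      have hdvd : 4 ∣ i.val := hoA ▸ orderOf_dvd_of_pow_eq_one hone
      have hlt : i.val < 2 * 2 := i.val_lt
      have hv : i.val = 0 := Nat.eq_zero_of_dvd_of_lt hdvd (by omega)
      have : i = 0 := (ZMod.val_eq_zero i).mp hv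
      rw [this]; rfl
    · rw [hphi_xa] at hone
      exfalso
      have hts : t = ((s ^ 2) ^ i.val * s)⁻¹ := by
        rw [eq_inv_iff_mul_eq_one]
        calc t * ((s ^ 2) ^ i.val * s)
            = (t * s * (s ^ 2) ^ i.val) * ((s ^ 2) ^ i.val)⁻¹ * s⁻¹ *
              ((s ^ 2) ^ i.val * s) := by group
          _ = 1 * ((s ^ 2) ^ i.val)⁻¹ * s⁻¹ * ((s ^ 2) ^ i.val * s) := by rw [hone]
          _ = 1 := by group
      have hcomm : s * t = t * s := by rw [hts]; group
      have h31 : s ^ 3 = s := by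
        calc s ^ 3 = t * s * t := hst.symm
          _ = s * t * t := by rw [← hcomm]
          _ = s := by rw [mul_assoc, ht2, mul_one]
      have hs2 : s ^ 2 = 1 := by
        have := congrArg (fun x => s⁻¹ * x) h31
        simpa [pow_succ, mul_assoc] using this
      have hdvd : (8 : ℕ) ∣ 2 := hs ▸ orderOf_dvd_of_pow_eq_one hs2
      norm_num at hdvd
  have hrange : φ.range = Subgroup.closure ({s ^ 2, t * s} : Set G) := by
    apply le_antisymm
    · rintro x ⟨y, rfl⟩
      have hAmem : s ^ 2 ∈ Subgroup.closure ({s ^ 2, t * s} : Set G) :=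
        Subgroup.subset_closure (Set.mem_insert _ _)
      have hBmem : t * s ∈ Subgroup.closure ({s ^ 2, t * s} : Set G) :=
        Subgroup.subset_closure (Set.mem_insert_of_mem _ rfl)
      cases y with
      | a i => rw [hphi_a]; exact pow_mem hAmem _
      | xa i => rw [hphi_xa]; exact mul_mem hBmem (pow_mem hAmem _)
    · rw [Subgroup.closure_le]
      rintro x hx
      rcases hx with rfl | hx
      · refine ⟨QuaternionGroup.a 1, ?_⟩
        rw [hphi_a, show ((1 : ZMod (2 * 2))).val = 1 by decide, pow_one]
      · rcases hx with rfl
        refine ⟨QuaternionGroup.xa 0, ?_⟩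
        rw [hphi_xa, show ((0 : ZMod (2 * 2))).val = 0 by decide, pow_zero, mul_one]
  exact ⟨(MulEquiv.subgroupCongr hrange.symm).trans (MonoidHom.ofInjective hinj).symm⟩
end

section
/- Let G be a group and s, t : G with orderOf s = 8, orderOf t = 2, and t * s * t = s^3. Then the subgroup of G generated by {s^2, t} is isomorphic (as a group) to the dihedral group of order 8 (DihedralGroup 4 in Mathlib). -/
/-- If `s, t : G` satisfy `orderOf s = 8`, `orderOf t = 2` and `t*s*t = s³`
(a semidihedral configuration), then the subgroup generated by `{s², t}`
is isomorphic to the dihedral group of order 8. -/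
theorem semidihedral_dihedral_subgroup {G : Type*} [Group G] (s t : G)
    (hs : orderOf s = 8) (ht : orderOf t = 2) (hst : t * s * t = s ^ 3) :
    Nonempty ((Subgroup.closure ({s ^ 2, t} : Set G)) ≃* DihedralGroup 4) := by
  set a : G := s ^ 2 with ha_def
  have hs8 : s ^ 8 = 1 := by rw [← hs]; exact pow_orderOf_eq_one s
  have ht2 : t * t = 1 := by
    have := pow_orderOf_eq_one t; rwa [ht, pow_two] at this
  have ha4' : a ^ 4 = 1 := by rw [ha_def, ← pow_mul]; norm_num; exact hs8
  have ha4 : orderOf a = 4 := by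
    rw [ha_def, orderOf_pow' s (by norm_num), hs]; norm_num
  have tat : t * a * t = a⁻¹ := by
    have h1 : (t * s * t) * (t * s * t) = t * a * t := by
      rw [ha_def, pow_two]
      calc (t * s * t) * (t * s * t) = t * s * (t * t) * s * t := by group
        _ = t * (s * s) * t := by rw [ht2]; group
    rw [← h1, hst, ← pow_add]
    apply eq_inv_of_mul_eq_one_left
    rw [ha_def, ← pow_add]
    exact hs8
  have htinv : t⁻¹ = t := inv_eq_of_mul_eq_one_right ht2
  have htan : ∀ n : ℕ, t * a ^ n = (a ^ n)⁻¹ * t := by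
    intro n
    have tat' : t * a * t⁻¹ = a⁻¹ := by rw [htinv]; exact tat
    have key : t * a ^ n * t⁻¹ = (a ^ n)⁻¹ := by
      rw [← inv_pow, ← tat', ← conj_pow]
    calc t * a ^ n = (t * a ^ n * t⁻¹) * t := by group
      _ = (a ^ n)⁻¹ * t := by rw [key]
  set A : ZMod 4 → G := fun i => a ^ i.val with hA_def
  have hA : ∀ i j : ZMod 4, A (i + j) = A i * A j := by
    intro i j
    show a ^ (i + j).val = a ^ i.val * a ^ j.val
    rw [ZMod.val_add, ← pow_add]
    calc a ^ ((i.val + j.val) % 4) = a ^ ((i.val + j.val) % orderOf a) := by rw [ha4]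
      _ = a ^ (i.val + j.val) := pow_mod_orderOf a _
  have hA0 : A 0 = 1 := by simp [hA_def]
  have hAneg : ∀ i : ZMod 4, A (-i) = (A i)⁻¹ := by
    intro i
    have : A (-i) * A i = 1 := by rw [← hA, neg_add_cancel, hA0]
    exact eq_inv_of_mul_eq_one_left this
  have hcomm : ∀ i : ZMod 4, t * A i = A (-i) * t := by
    intro i; rw [hAneg]; exact htan i.val
  have hswap : ∀ i : ZMod 4, A i * t = t * A (-i) := by
    intro i; rw [hcomm (-i), neg_neg]
  let f : DihedralGroup 4 →* G := MonoidHom.mk'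
    (fun x => match x with
      | DihedralGroup.r i => A i
      | DihedralGroup.sr i => t * A i)
    (by
      rintro (i | i) (j | j)
      · rw [DihedralGroup.r_mul_r]; exact hA i j
      · show t * A (j - i) = A i * (t * A j)
        calc t * A (j - i) = t * A (-i + j) := by rw [neg_add_eq_sub]
          _ = t * (A (-i) * A j) := by rw [hA]
          _ = (t * A (-i)) * A j := by group
          _ = (A i * t) * A j := by rw [hswap]
          _ = A i * (t * A j) := by group
      · show t * A (i + j) = (t * A i) * A j
        rw [mul_assoc, ← hA]
      · show A (j - i) = (t * A i) * (t * A j)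
        symm
        calc (t * A i) * (t * A j) = t * (A i * t) * A j := by group
          _ = t * (t * A (-i)) * A j := by rw [hswap]
          _ = (t * t) * (A (-i) * A j) := by group
          _ = A (-i + j) := by rw [ht2, one_mul, hA]
          _ = A (j - i) := by congr 1; ring)
  have hf_r : ∀ i : ZMod 4, f (DihedralGroup.r i) = A i := fun _ => rfl
  have hf_sr : ∀ i : ZMod 4, f (DihedralGroup.sr i) = t * A i := fun _ => rfl
  have hs2ne : s ^ 2 ≠ 1 := by
    intro h
    have := orderOf_dvd_of_pow_eq_one h
    rw [hs] at this; omega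
  have hinj : Function.Injective f := by
    rw [injective_iff_map_eq_one]
    rintro (i | i) h
    · rw [hf_r] at h
      have h' : a ^ i.val = 1 := h
      have hdvd := orderOf_dvd_of_pow_eq_one h'
      rw [ha4] at hdvd
      have hlt : i.val < 4 := i.val_lt
      have hv0 : i.val = 0 := by omega
      rw [show (1 : DihedralGroup 4) = DihedralGroup.r 0 from rfl]
      congr 1
      exact (ZMod.val_eq_zero i).mp hv0
    · exfalso
      rw [hf_sr] at h
      have htv : t = (a ^ i.val)⁻¹ := by
        rw [eq_inv_iff_mul_eq_one]; exact h
      have hcs : Commute s t := by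
        rw [htv, ha_def, ← pow_mul]
        exact ((Commute.refl s).pow_right _).inv_right
      have hkey : t * s * t = s := by
        rw [mul_assoc, hcs.eq, ← mul_assoc, ht2, one_mul]
      rw [hst] at hkey
      apply hs2ne
      have h3 : s ^ 3 * s⁻¹ = s * s⁻¹ := by rw [hkey]
      rw [mul_inv_cancel] at h3
      calc s ^ 2 = s ^ 3 * s⁻¹ := by group
        _ = 1 := h3
  have hrange : f.range = Subgroup.closure ({s ^ 2, t} : Set G) := by
    apply le_antisymm
    · rintro x ⟨(i | i), rfl⟩
      · exact pow_mem (Subgroup.subset_closure (Set.mem_insert _ _)) _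
      · exact mul_mem (Subgroup.subset_closure (Set.mem_insert_of_mem _ rfl))
          (pow_mem (Subgroup.subset_closure (Set.mem_insert _ _)) _)
    · rw [Subgroup.closure_le]
      rintro x (rfl | rfl)
      · exact ⟨DihedralGroup.r 1, by
          rw [hf_r]
          show a ^ (1 : ZMod 4).val = s ^ 2
          rw [show (1 : ZMod 4).val = 1 from rfl, pow_one]⟩
      · exact ⟨DihedralGroup.sr 0, by rw [hf_sr, hA0, mul_one]⟩
  exact ⟨((MonoidHom.ofInjective hinj).trans (MulEquiv.subgroupCongr hrange)).symm⟩
end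

section
/- Let S ⊆ ℂ be the set of complex numbers λ with λ^8 = 1 and λ^4 = -1 (the four primitive-type odd 8th roots of unity ω, ω^3, ω^5, ω^7 where ω = (1+i)/√2). Then (1/8) · Σ_{λ ∈ S} 2λ/(1-λ)^2 = -1. -/
open Complex

/-- Eta-invariant computation for `L³(8,(1,1))`: summing `2λ/(1-λ)²` over the four
8th roots of unity with `λ⁴ = -1` and dividing by 8 gives `-1`. -/
theorem eta_L3_sum :
    (1 / 8 : ℂ) * ∑ᶠ z ∈ {z : ℂ | z ^ 8 = 1 ∧ z ^ 4 = -1},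
        2 * z / (1 - z) ^ 2 = -1 := by
  classical
  obtain ⟨a, ha2⟩ : ∃ a : ℂ, a ^ 2 = I := by
    rcases IsAlgClosed.exists_pow_nat_eq I (n := 2) (by norm_num) with ⟨a, ha⟩
    exact ⟨a, ha⟩
  have ha4 : a ^ 4 = -1 := by
    have h : a ^ 4 = (a ^ 2) ^ 2 := by ring
    rw [h, ha2, I_sq]
  have ha0 : a ≠ 0 := by
    intro h; rw [h] at ha2; simp at ha2; exact I_ne_zero ha2.symm
  have hI4 : I ^ 4 = 1 := by
    have h : I ^ 4 = (I ^ 2) ^ 2 := by ring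
    rw [h, I_sq]; norm_num
  have hb4 : (I * a) ^ 4 = -1 := by rw [mul_pow, hI4, ha4]; ring
  have hc4 : (-a) ^ 4 = -1 := by rw [show (-a)^4 = a^4 by ring, ha4]
  have hd4 : (-(I * a)) ^ 4 = -1 := by rw [show (-(I*a))^4 = (I*a)^4 by ring, hb4]
  have key : ∀ z : ℂ, z ^ 4 = -1 → z ^ 8 = 1 ∧ z ^ 4 = -1 := fun z h =>
    ⟨by rw [show z ^ 8 = (z ^ 4) ^ 2 by ring, h]; norm_num, h⟩
  -- the set equals an explicit finset
  have hset : {z : ℂ | z ^ 8 = 1 ∧ z ^ 4 = -1}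
      = (({a, I * a, -a, -(I * a)} : Finset ℂ) : Set ℂ) := by
    ext z
    simp only [Set.mem_setOf_eq, Finset.coe_insert, Finset.coe_singleton,
      Set.mem_insert_iff, Set.mem_singleton_iff]
    constructor
    · rintro ⟨-, hz4⟩
      have hfac : (z - a) * (z + a) * ((z - I * a) * (z + I * a)) = 0 := by
        linear_combination hz4 + (a^4 - z^2*a^2 - 1) * I_sq + (-I - a^2) * ha2
      rcases mul_eq_zero.mp hfac with h | h
      · rcases mul_eq_zero.mp h with h | h
        · left; linear_combination h
        · right; right; left; linear_combination h
      · rcases mul_eq_zero.mp h with h | h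
        · right; left; linear_combination h
        · right; right; right; linear_combination h
    · rintro (rfl | rfl | rfl | rfl)
      exacts [key _ ha4, key _ hb4, key _ hc4, key _ hd4]
  rw [hset, finsum_mem_coe_finset]
  -- distinctness
  have hI1 : (I : ℂ) ≠ 1 := by
    intro h; have h2 := I_sq; rw [h] at h2; norm_num at h2
  have hab : a ≠ I * a := by
    intro h
    have h2 : I * a = 1 * a := by linear_combination -h
    exact hI1 (mul_right_cancel₀ ha0 h2)
  have hac : a ≠ -a := by
    intro h
    apply ha0
    have h2 : (2:ℂ) * a = 0 := by linear_combination h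
    simpa using h2
  have had : a ≠ -(I * a) := by
    intro h
    have h2 : (1 + I) * a = 0 := by linear_combination h
    rcases mul_eq_zero.mp h2 with h3 | h3
    · have h4 := I_sq
      rw [show I = -1 by linear_combination h3] at h4
      norm_num at h4
    · exact ha0 h3
  have hbc : I * a ≠ -a := by
    intro h
    have h2 : (I + 1) * a = 0 := by linear_combination h
    rcases mul_eq_zero.mp h2 with h3 | h3
    · have h4 := I_sq
      rw [show I = -1 by linear_combination h3] at h4
      norm_num at h4
    · exact ha0 h3
  have hbd : I * a ≠ -(I * a) := by
    intro h
    have h2 : (2 : ℂ) * (I * a) = 0 := by linear_combination h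
    simp [ha0, I_ne_zero] at h2
  have hcd : -a ≠ -(I * a) := by
    intro h
    exact hab (by linear_combination -h)
  have hsum : (∑ z ∈ ({a, I * a, -a, -(I * a)} : Finset ℂ),
      2 * z / (1 - z) ^ 2)
      = 2 * a / (1 - a) ^ 2 + 2 * (I * a) / (1 - I * a) ^ 2
        + 2 * (-a) / (1 - -a) ^ 2 + 2 * (-(I * a)) / (1 - -(I * a)) ^ 2 := by
    rw [Finset.sum_insert (by simp [hab, hac, had]),
      Finset.sum_insert (by simp [hbc, hbd]),
      Finset.sum_pair hcd]
    ring
  rw [hsum]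
  have hne : ∀ z : ℂ, z ^ 4 = -1 → 1 - z ≠ 0 := by
    intro z hz h
    have h2 : z = 1 := by linear_combination -h
    rw [h2] at hz; norm_num at hz
  have h1 := hne a ha4
  have h2 := hne (I * a) hb4
  have h3 := hne (-a) hc4
  have h4 := hne (-(I * a)) hd4
  have h3' : (1 : ℂ) + a ≠ 0 := fun h => h3 (by linear_combination h)
  have h4' : (1 : ℂ) + I * a ≠ 0 := fun h => h4 (by linear_combination h)
  have hb2 : (I * a) ^ 2 = -I := by rw [mul_pow, ha2, I_sq]; ring
  have pair1 : 2 * a / (1 - a) ^ 2 + 2 * (-a) / (1 - -a) ^ 2 = -4 := by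
    rw [sub_neg_eq_add, div_add_div _ _ (pow_ne_zero 2 h1) (pow_ne_zero 2 h3'),
      div_eq_iff (mul_ne_zero (pow_ne_zero 2 h1) (pow_ne_zero 2 h3'))]
    linear_combination (4 * I + 4 * a ^ 2) * ha2 + 4 * I_sq
  have pair2 : 2 * (I * a) / (1 - I * a) ^ 2 + 2 * (-(I * a)) / (1 - -(I * a)) ^ 2
      = -4 := by
    rw [sub_neg_eq_add, div_add_div _ _ (pow_ne_zero 2 h2) (pow_ne_zero 2 h4'),
      div_eq_iff (mul_ne_zero (pow_ne_zero 2 h2) (pow_ne_zero 2 h4'))]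
    linear_combination (4 * (I * a) ^ 2 - 4 * I) * hb2 + 4 * I_sq
  calc (1 / 8 : ℂ) * (2 * a / (1 - a) ^ 2 + 2 * (I * a) / (1 - I * a) ^ 2
        + 2 * (-a) / (1 - -a) ^ 2 + 2 * (-(I * a)) / (1 - -(I * a)) ^ 2)
      = (1 / 8 : ℂ) * ((2 * a / (1 - a) ^ 2 + 2 * (-a) / (1 - -a) ^ 2)
        + (2 * (I * a) / (1 - I * a) ^ 2 + 2 * (-(I * a)) / (1 - -(I * a)) ^ 2)) := by
        ring
    _ = -1 := by rw [pair1, pair2]; norm_num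
end

section
/- Let S ⊆ ℂ be the set of complex numbers λ with λ^8 = 1 and λ^4 = -1 (the four primitive-type odd 8th roots of unity ω, ω^3, ω^5, ω^7 where ω = (1+i)/√2). Then (1/8) · Σ_{λ ∈ S} 2λ^2/(1-λ)^4 = 3/2. -/
open Complex

noncomputable def w : ℂ := (1 + I) / (Real.sqrt 2 : ℂ)

lemma r2_ne : ((Real.sqrt 2 : ℝ) : ℂ) ≠ 0 := by
  rw [Ne, Complex.ofReal_eq_zero]
  exact Real.sqrt_ne_zero'.mpr (by norm_num)

lemma r2_sq : ((Real.sqrt 2 : ℝ) : ℂ) ^ 2 = 2 := by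
  rw [← Complex.ofReal_pow, Real.sq_sqrt (by norm_num : (0:ℝ) ≤ 2)]
  norm_num

lemma w_sq : w ^ 2 = I := by
  unfold w
  rw [div_pow, r2_sq]
  linear_combination I_sq / 2

lemma w_pow4 : w ^ 4 = -1 := by
  have h : w ^ 4 = (w ^ 2) ^ 2 := by ring
  rw [h, w_sq, I_sq]

lemma w_ne_zero : w ≠ 0 := by
  intro h
  have h2 := w_sq
  rw [h] at h2
  simp at h2
  exact I_ne_zero h2.symm

lemma Iw_pow4 : (I * w) ^ 4 = -1 := by
  linear_combination w ^ 4 * (I ^ 2 - 1) * I_sq + w_pow4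

lemma I_ne_one' : I ≠ 1 := by
  intro h
  have := congrArg Complex.im h
  simp at this

lemma I_ne_neg_one : I ≠ -1 := by
  intro h
  have := congrArg Complex.im h
  simp at this

lemma eight_pow {z : ℂ} (h : z ^ 4 = -1) : z ^ 8 = 1 := by
  have h8 : z ^ 8 = (z ^ 4) ^ 2 := by ring
  rw [h8, h]; norm_num

/-- If λ⁴ = -1 then f(λ) + f(-λ) = 6. -/
lemma pair_sum {l : ℂ} (h : l ^ 4 = -1) :
    2 * l ^ 2 / (1 - l) ^ 4 + 2 * (-l) ^ 2 / (1 - -l) ^ 4 = 6 := by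
  have h1 : ((1 : ℂ) - l) ^ 4 ≠ 0 := by
    apply pow_ne_zero
    intro hl
    have hl1 : l = 1 := by linear_combination -hl
    rw [hl1] at h; norm_num at h
  have h2 : ((1 : ℂ) - -l) ^ 4 ≠ 0 := by
    apply pow_ne_zero
    intro hl
    have hl1 : l = -1 := by linear_combination hl
    rw [hl1] at h; norm_num at h
  rw [div_add_div _ _ h1 h2, div_eq_iff (mul_ne_zero h1 h2)]
  linear_combination (-6 * l ^ 4 + 28 * l ^ 2 - 6) * h

/-- Eta-invariant computation for `L⁷(8,(1,1,1,1))`: summing `2λ²/(1-λ)⁴` over the four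
8th roots of unity with `λ⁴ = -1` and dividing by 8 gives `3/2`. -/
theorem eta_L7_sum :
    (1 / 8 : ℂ) * ∑ᶠ z ∈ {z : ℂ | z ^ 8 = 1 ∧ z ^ 4 = -1},
        2 * z ^ 2 / (1 - z) ^ 4 = 3 / 2 := by
  have hw2 := w_sq
  have hw4 := w_pow4
  have hw0 := w_ne_zero
  have hset : {z : ℂ | z ^ 8 = 1 ∧ z ^ 4 = -1} = (({w, I*w, -w, -(I*w)} : Finset ℂ) : Set ℂ) := by
    ext z
    simp only [Set.mem_setOf_eq, Finset.coe_insert, Set.mem_insert_iff, Finset.coe_singleton,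
      Set.mem_singleton_iff]
    constructor
    · rintro ⟨h8, h4⟩
      have hprod : (z - w) * (z + w) * ((z - I*w) * (z + I*w)) = 0 := by
        linear_combination h4 - w_pow4 + (w ^ 4 - w ^ 2 * z ^ 2) * I_sq
      rcases mul_eq_zero.mp hprod with h | h
      · rcases mul_eq_zero.mp h with h | h
        · exact Or.inl (sub_eq_zero.mp h)
        · exact Or.inr (Or.inr (Or.inl (by linear_combination h)))
      · rcases mul_eq_zero.mp h with h | h
        · exact Or.inr (Or.inl (sub_eq_zero.mp h))
        · exact Or.inr (Or.inr (Or.inr (by linear_combination h)))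
    · intro hz
      have h4 : z ^ 4 = -1 := by
        rcases hz with h | h | h | h <;> subst h
        · exact w_pow4
        · exact Iw_pow4
        · linear_combination w_pow4
        · linear_combination Iw_pow4
      exact ⟨eight_pow h4, h4⟩
  rw [hset, finsum_mem_coe_finset]
  have hne1 : w ≠ I * w := by
    intro h
    have hz : w * (1 - I) = 0 := by linear_combination h
    rcases mul_eq_zero.mp hz with h' | h'
    · exact hw0 h'
    · exact I_ne_one' (by linear_combination -h')
  have hne2 : w ≠ -w := fun h => hw0 (by linear_combination h / 2)
  have hne3 : w ≠ -(I * w) := by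
    intro h
    have hz : w * (1 + I) = 0 := by linear_combination h
    rcases mul_eq_zero.mp hz with h' | h'
    · exact hw0 h'
    · exact I_ne_neg_one (by linear_combination h')
  have hne4 : I * w ≠ -w := by
    intro h
    have hz : w * (1 + I) = 0 := by linear_combination h
    rcases mul_eq_zero.mp hz with h' | h'
    · exact hw0 h'
    · exact I_ne_neg_one (by linear_combination h')
  have hne5 : I * w ≠ -(I * w) := by
    intro h
    have hz : I * w = 0 := by linear_combination h / 2
    rcases mul_eq_zero.mp hz with h' | h'
    · exact I_ne_zero h'
    · exact hw0 h'
  have hne6 : -w ≠ -(I * w) := fun h => hne1 (by linear_combination -h)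
  rw [Finset.sum_insert (by simp [hne1, hne2, hne3]),
    Finset.sum_insert (by simp [hne4, hne5]),
    Finset.sum_insert (by simp [hne6]),
    Finset.sum_singleton]
  have p1 := pair_sum hw4
  have p2 := pair_sum Iw_pow4
  linear_combination (p1 + p2) / 8
end

section
/- For every natural number m ≥ 1, the following identity of rational numbers holds: (1/2^{4m+6} + 3/2^{2m+4})·(1/2^{4m-1} + 3/2^{2m}) - (1/2^{4m+2} + 3/2^{2m+2})·(1/2^{4m+3} + 3/2^{2m+2}) = 9/2^{6m+6}. Consequently this determinant has additive order exactly 2^{6m+6} in ℚ/ℤ. -/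
/-- The determinant of the matrix of eta invariants of `M_Q^{8m+7}` and
`M_Q^{8m-1} × B⁸` equals `9/2^(6m+6)`, which has additive order exactly
`2^(6m+6)` in `ℚ/ℤ`. -/
theorem eta_det_8m7 (m : ℕ) (hm : 1 ≤ m) :
    ((1 / 2 ^ (4 * m + 6) + 3 / 2 ^ (2 * m + 4)) *
        (1 / 2 ^ (4 * m - 1) + 3 / 2 ^ (2 * m)) -
      (1 / 2 ^ (4 * m + 2) + 3 / 2 ^ (2 * m + 2)) *
        (1 / 2 ^ (4 * m + 3) + 3 / 2 ^ (2 * m + 2)) : ℚ) = 9 / 2 ^ (6 * m + 6) ∧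
    addOrderOf ((QuotientAddGroup.mk (9 / 2 ^ (6 * m + 6) : ℚ) :
        ℚ ⧸ AddSubgroup.zmultiples (1 : ℚ))) = 2 ^ (6 * m + 6) := by
  obtain ⟨k, rfl⟩ := Nat.exists_eq_add_of_le hm
  constructor
  · have h : 4 * (1 + k) - 1 = 4 * k + 3 := by omega
    rw [h]
    have h2 : (2 : ℚ) ≠ 0 := by norm_num
    field_simp
    ring_nf
  · have key : addOrderOf ((((9 : ℕ) : ℚ) / ((2 ^ (6 * (1 + k) + 6) : ℕ) : ℚ) * 1 :
        ℚ) : AddCircle (1 : ℚ)) = 2 ^ (6 * (1 + k) + 6) := by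
      apply AddCircle.addOrderOf_div_of_gcd_eq_one
      · positivity
      · exact Nat.Coprime.pow_right _ (by decide)
    have : (((9 : ℕ) : ℚ) / ((2 ^ (6 * (1 + k) + 6) : ℕ) : ℚ) * 1 : ℚ)
        = (9 / 2 ^ (6 * (1 + k) + 6) : ℚ) := by push_cast; ring
    rw [this] at key
    exact key
end

section
/- Let R = MvPolynomial (Fin 4) (ZMod 2) with variables x, y, u, P, and let I be the ideal generated by the four polynomials x*y + x^2, x*u, x^3, and u^2 + (x^2 + y^2)*P. Let a, a', b, b' be odd natural numbers with a, a', b, b' ≥ 1 and let c, c' be natural numbers, such that a + b = a' + b' and b + 2c = b' + 2c'. Then y^a * u^b * P^c + y^{a'} * u^{b'} * P^{c'} ∈ I; that is, y^a u^b P^c = y^{a'} u^{b'} P^{c'} in R/I. -/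
open MvPolynomial

namespace MonomialsAux

noncomputable abbrev R := MvPolynomial (Fin 4) (ZMod 2)

noncomputable def xx : R := X 0
noncomputable def yy : R := X 1
noncomputable def uu : R := X 2
noncomputable def PP : R := X 3

noncomputable def II : Ideal R :=
  Ideal.span ({xx * yy + xx ^ 2, xx * uu, xx ^ 3, uu ^ 2 + (xx ^ 2 + yy ^ 2) * PP} : Set R)

lemma mem1 : xx * yy + xx ^ 2 ∈ II := Ideal.subset_span (by simp [II])
lemma mem3 : xx ^ 3 ∈ II := Ideal.subset_span (by simp [II])
lemma mem4 : uu ^ 2 + (xx ^ 2 + yy ^ 2) * PP ∈ II := Ideal.subset_span (by simp [II])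

lemma key : yy * uu ^ 2 + yy ^ 3 * PP ∈ II := by
  have h : yy * uu ^ 2 + yy ^ 3 * PP =
      yy * (uu ^ 2 + (xx ^ 2 + yy ^ 2) * PP) - (xx * (xx * yy + xx ^ 2) * PP - xx ^ 3 * PP) := by
    ring
  rw [h]
  exact II.sub_mem (II.mul_mem_left _ mem4)
    (II.sub_mem (Ideal.mul_mem_right _ _ (II.mul_mem_left _ mem1))
      (Ideal.mul_mem_right _ _ mem3))

lemma step (a b c : ℕ) :
    yy ^ (a + 1) * uu ^ (b + 2) * PP ^ c + yy ^ (a + 3) * uu ^ b * PP ^ (c + 1) ∈ II := by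
  have h : yy ^ (a + 1) * uu ^ (b + 2) * PP ^ c + yy ^ (a + 3) * uu ^ b * PP ^ (c + 1) =
      (yy ^ a * uu ^ b * PP ^ c) * (yy * uu ^ 2 + yy ^ 3 * PP) := by ring
  rw [h]
  exact II.mul_mem_left _ key

lemma gen (k : ℕ) : ∀ a b c : ℕ,
    yy ^ (a + 1) * uu ^ (b + 2 * k) * PP ^ c + yy ^ (a + 1 + 2 * k) * uu ^ b * PP ^ (c + k) ∈ II := by
  induction k with
  | zero =>
      intro a b c
      show yy ^ (a + 1) * uu ^ b * PP ^ c + yy ^ (a + 1) * uu ^ b * PP ^ c ∈ II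
      rw [CharTwo.add_self_eq_zero]
      exact II.zero_mem
  | succ k ih =>
      intro a b c
      have h1 : yy ^ (a + 1) * uu ^ ((b + 2 * k) + 2) * PP ^ c
          + yy ^ (a + 3) * uu ^ (b + 2 * k) * PP ^ (c + 1) ∈ II := step a (b + 2 * k) c
      have h2 : yy ^ ((a + 2) + 1) * uu ^ (b + 2 * k) * PP ^ (c + 1)
          + yy ^ ((a + 2) + 1 + 2 * k) * uu ^ b * PP ^ ((c + 1) + k) ∈ II := ih (a + 2) b (c + 1)
      have h3 := II.add_mem h1 h2
      have heq : yy ^ (a + 1) * uu ^ (b + 2 * (k + 1)) * PP ^ c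
          + yy ^ (a + 1 + 2 * (k + 1)) * uu ^ b * PP ^ (c + (k + 1)) =
          (yy ^ (a + 1) * uu ^ ((b + 2 * k) + 2) * PP ^ c
            + yy ^ (a + 3) * uu ^ (b + 2 * k) * PP ^ (c + 1))
          + (yy ^ ((a + 2) + 1) * uu ^ (b + 2 * k) * PP ^ (c + 1)
            + yy ^ ((a + 2) + 1 + 2 * k) * uu ^ b * PP ^ ((c + 1) + k)) := by
        have hMM : yy ^ (a + 3) * uu ^ (b + 2 * k) * PP ^ (c + 1)
            + yy ^ (a + 3) * uu ^ (b + 2 * k) * PP ^ (c + 1) = 0 :=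
          CharTwo.add_self_eq_zero _
        have e1 : a + 1 + 2 * (k + 1) = (a + 2) + 1 + 2 * k := by ring
        have e2 : c + (k + 1) = (c + 1) + k := by ring
        have e3 : b + 2 * (k + 1) = (b + 2 * k) + 2 := by ring
        rw [e1, e2, e3]
        have e4 : (a + 2) + 1 = a + 3 := by ring
        rw [e4]
        linear_combination -hMM
      rw [heq]
      exact h3

lemma main (a a' b b' c c' : ℕ)
    (ha : Odd a) (hb' : Odd b')
    (hle : b' ≤ b)
    (h1 : a + b = a' + b') (h2 : b + 2 * c = b' + 2 * c') :
    yy ^ a * uu ^ b * PP ^ c + yy ^ a' * uu ^ b' * PP ^ c' ∈ II := by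
  obtain ⟨k, hbk⟩ : ∃ k, b = b' + 2 * k := ⟨c' - c, by omega⟩
  have ha' : a' = a + 2 * k := by omega
  have hc' : c' = c + k := by omega
  obtain ⟨a0, ha0⟩ : ∃ a0, a = a0 + 1 := ⟨a - 1, by rcases ha with ⟨m, hm⟩; omega⟩
  subst hbk ha' hc' ha0
  exact gen k a0 b' c

end MonomialsAux

/-- In the mod 2 cohomology ring of `BSD_{2^N}`,
`F₂[x,y,u,P]/(xy+x², xu, x³, u²+(x²+y²)P)`, two monomials `yᵃu^bP^c` and
`y^{a'}u^{b'}P^{c'}` with `a, a', b, b'` odd, `a+b = a'+b'` and `b+2c = b'+2c'`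
are equal. -/
theorem monomials_same_restriction_eq (a a' b b' c c' : ℕ)
    (ha : Odd a) (ha' : Odd a') (hb : Odd b) (hb' : Odd b')
    (h1 : a + b = a' + b') (h2 : b + 2 * c = b' + 2 * c') :
    let x : MvPolynomial (Fin 4) (ZMod 2) := X 0
    let y : MvPolynomial (Fin 4) (ZMod 2) := X 1
    let u : MvPolynomial (Fin 4) (ZMod 2) := X 2
    let P : MvPolynomial (Fin 4) (ZMod 2) := X 3
    y ^ a * u ^ b * P ^ c + y ^ a' * u ^ b' * P ^ c' ∈
      Ideal.span ({x * y + x ^ 2, x * u, x ^ 3, u ^ 2 + (x ^ 2 + y ^ 2) * P} :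
        Set (MvPolynomial (Fin 4) (ZMod 2))) := by
  intro x y u P
  rcases le_total b' b with hle | hle
  · exact MonomialsAux.main a a' b b' c c' ha hb' hle h1 h2
  · have := MonomialsAux.main a' a b' b c' c ha' hb hle h1.symm h2.symm
    rw [show (y ^ a * u ^ b * P ^ c + y ^ a' * u ^ b' * P ^ c')
        = (y ^ a' * u ^ b' * P ^ c' + y ^ a * u ^ b * P ^ c) from add_comm _ _]
    exact this
end

section
/- Let S = MvPolynomial (Fin 2) (ZMod 2) with variables p, q, and let A be the subalgebra of S generated over ZMod 2 by the two elements p and q^2 + p*q (i.e. A = Algebra.adjoin (ZMod 2) {p, q*(p+q)}). Then every f ∈ S can be written uniquely in the form f = g + q*h with g, h ∈ A; that is, S decomposes as the internal direct sum A ⊕ qA of A-modules. -/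
open MvPolynomial

namespace KleinAux

local notation "S" => MvPolynomial (Fin 2) (ZMod 2)

noncomputable def Asub : Subalgebra (ZMod 2) (MvPolynomial (Fin 2) (ZMod 2)) :=
  Algebra.adjoin (ZMod 2) ({X 0, X 1 * (X 0 + X 1)} : Set (MvPolynomial (Fin 2) (ZMod 2)))

lemma p_mem : (X 0 : S) ∈ Asub := Algebra.subset_adjoin (Or.inl rfl)
lemma d_mem : (X 1 * (X 0 + X 1) : S) ∈ Asub := Algebra.subset_adjoin (Or.inr rfl)

lemma two_eq_zero : (2 : S) = 0 := by
  rw [show (2 : S) = algebraMap (ZMod 2) (MvPolynomial (Fin 2) (ZMod 2)) 2 from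
    (map_ofNat _ 2).symm, show (2 : ZMod 2) = 0 from by decide, map_zero]

lemma exists_decomp (f : S) : ∃ g ∈ Asub, ∃ h ∈ Asub, f = g + X 1 * h := by
  induction f using MvPolynomial.induction_on with
  | C a =>
    refine ⟨C a, ?_, 0, Asub.zero_mem, by ring⟩
    simpa [MvPolynomial.algebraMap_eq] using Asub.algebraMap_mem a
  | add f₁ f₂ h₁ h₂ =>
    obtain ⟨g₁, hg₁, k₁, hk₁, e₁⟩ := h₁
    obtain ⟨g₂, hg₂, k₂, hk₂, e₂⟩ := h₂
    exact ⟨g₁ + g₂, Asub.add_mem hg₁ hg₂, k₁ + k₂, Asub.add_mem hk₁ hk₂,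
      by rw [e₁, e₂]; ring⟩
  | mul_X f n ih =>
    obtain ⟨g, hg, k, hk, e⟩ := ih
    fin_cases n <;> simp only [Fin.zero_eta, Fin.mk_one]
    · exact ⟨g * X 0, Asub.mul_mem hg p_mem, k * X 0, Asub.mul_mem hk p_mem,
        by rw [e]; ring⟩
    · refine ⟨(X 1 * (X 0 + X 1)) * k, Asub.mul_mem d_mem hk,
        g + X 0 * k, Asub.add_mem hg (Asub.mul_mem p_mem hk), ?_⟩
      rw [e]
      linear_combination (-(X 0 * X 1 * k)) * two_eq_zero

noncomputable def σ : MvPolynomial (Fin 2) (ZMod 2) →ₐ[ZMod 2] MvPolynomial (Fin 2) (ZMod 2) :=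
  aeval (fun i => if i = 0 then X 0 else X 0 + X 1)

lemma σ_X0 : σ (X 0) = X 0 := by simp [σ]

lemma σ_X1 : σ (X 1) = X 0 + X 1 := by simp [σ]

lemma sigma_fix {a : S} (ha : a ∈ Asub) : σ a = a := by
  induction ha using Algebra.adjoin_induction with
  | mem x hx =>
    rcases hx with h | h
    · subst h; exact σ_X0
    · subst h
      rw [map_mul, map_add, σ_X0, σ_X1]
      linear_combination (X 0 * (X 0 + X 1) : S) * two_eq_zero
  | algebraMap r => simp [σ]
  | add x y _ _ hx hy => rw [map_add, hx, hy]
  | mul x y _ _ hx hy => rw [map_mul, hx, hy]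

lemma unique_decomp {g₁ g₂ k₁ k₂ : S} (hg₁ : g₁ ∈ Asub) (hg₂ : g₂ ∈ Asub)
    (hk₁ : k₁ ∈ Asub) (hk₂ : k₂ ∈ Asub)
    (h : g₁ + X 1 * k₁ = g₂ + X 1 * k₂) : g₁ = g₂ ∧ k₁ = k₂ := by
  have h' : g₁ + (X 0 + X 1) * k₁ = g₂ + (X 0 + X 1) * k₂ := by
    have h2 := congrArg σ h
    rw [map_add, map_add, map_mul, map_mul, σ_X1, sigma_fix hg₁, sigma_fix hg₂,
      sigma_fix hk₁, sigma_fix hk₂] at h2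
    exact h2
  have hx : (X 0 : S) * (k₁ - k₂) = 0 := by linear_combination h' - h
  have hX0 : (X 0 : S) ≠ 0 := MvPolynomial.X_ne_zero 0
  have hk : k₁ = k₂ := by
    rcases mul_eq_zero.mp hx with h0 | h0
    · exact absurd h0 hX0
    · exact sub_eq_zero.mp h0
  subst hk
  exact ⟨add_right_cancel h, rfl⟩

end KleinAux

/-- In `S = F₂[p,q]` (the mod 2 cohomology of `BV(2)`), with
`A = F₂[p, q(p+q)]` (the image of `H^*(BD₈)`), every `f ∈ S` can be written
uniquely as `f = g + q·h` with `g, h ∈ A`: that is, `S = A ⊕ qA`. -/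
theorem klein_cohomology_decomposition (f : MvPolynomial (Fin 2) (ZMod 2)) :
    ∃! gh : (Algebra.adjoin (ZMod 2)
          ({X 0, X 1 * (X 0 + X 1)} : Set (MvPolynomial (Fin 2) (ZMod 2)))) ×
        (Algebra.adjoin (ZMod 2)
          ({X 0, X 1 * (X 0 + X 1)} : Set (MvPolynomial (Fin 2) (ZMod 2)))),
      f = (gh.1 : MvPolynomial (Fin 2) (ZMod 2)) + X 1 * (gh.2 : MvPolynomial (Fin 2) (ZMod 2)) := by
  obtain ⟨g, hg, k, hk, e⟩ := KleinAux.exists_decomp f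
  refine ⟨⟨⟨g, hg⟩, ⟨k, hk⟩⟩, e, ?_⟩
  rintro ⟨⟨g', hg'⟩, ⟨k', hk'⟩⟩ e'
  have h := KleinAux.unique_decomp hg' hg hk' hk (e'.symm.trans e)
  ext <;> simp [h.1, h.2]
end
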